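/- Let w be an infinite word over Σ₃ = {0,1,2} such that if x is a subword of w with |x| ≥ 2 then x^R is not a subword of w. Then w is obtained from (012)^ω by applying a permutation of the alphabet symbols {0,1,2} letterwise; i.e., there is a permutation σ of {0,1,2} such that w is the image of (012)^ω under σ. -/

import Mathlib

/-- `x` occurs as a contiguous block of consecutive letters of the infinite word `w`. -/
def IsFactor {α : Type*} (x : List α) (w : ℕ → α) : Prop :=
  ∃ i : ℕ, x = (List.range x.length).map fun j => w (i + j)

/-- The periodic infinite word `y^ω = yyy⋯`. -/
def powOmega {α : Type*} (y : List α) (h : y ≠ []) : ℕ → α :=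
  fun n => y[n % y.length]'(Nat.mod_lt n (List.length_pos_iff.mpr h))

/-- Any infinite ternary word avoiding reversals of all its subwords of length ≥ 2
is a letterwise permutation of `(012)^ω`. -/
theorem stmt_2 (w : ℕ → Fin 3)
    (hw : ∀ x : List (Fin 3), IsFactor x w → 2 ≤ x.length → ¬ IsFactor x.reverse w) :
    ∃ σ : Equiv.Perm (Fin 3),
      w = fun n => σ (powOmega ([0, 1, 2] : List (Fin 3)) (by simp) n) := by
  have h2 : ∀ n, w n ≠ w (n + 1) := by
    intro n h
    exact hw [w n, w (n + 1)] ⟨n, by simp [List.range_succ]⟩ (by simp)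
      ⟨n, by simp [List.range_succ, h]⟩
  have h3 : ∀ n, w n ≠ w (n + 2) := by
    intro n h
    exact hw [w n, w (n + 1), w (n + 2)] ⟨n, by simp [List.range_succ]⟩ (by simp)
      ⟨n, by simp [List.range_succ, h]⟩
  have key : ∀ a b c d : Fin 3, a ≠ b → a ≠ c → b ≠ c → d ≠ b → d ≠ c → d = a := by
    intro a b c d
    fin_cases a <;> fin_cases b <;> fin_cases c <;> fin_cases d <;> decide
  have hper : ∀ n, w (n + 3) = w n := fun n =>
    key (w n) (w (n + 1)) (w (n + 2)) (w (n + 3)) (h2 n) (h3 n) (h2 (n + 1))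
      (fun h => h3 (n + 1) h.symm) (fun h => h2 (n + 2) h.symm)
  have hmod : ∀ n, w n = w (n % 3) := by
    intro n
    induction n using Nat.strong_induction_on with
    | _ n ih =>
      rcases Nat.lt_or_ge n 3 with h | h
      · rw [Nat.mod_eq_of_lt h]
      · have hn : n - 3 + 3 = n := by omega
        rw [← hn, hper, ih (n - 3) (by omega)]
        congr 1
        omega
  let f : Fin 3 → Fin 3 := ![w 0, w 1, w 2]
  have hinj : Function.Injective f := by
    have e1 : w 0 ≠ w 1 := h2 0
    have e2 : w 0 ≠ w 2 := h3 0
    have e3 : w 1 ≠ w 2 := h2 1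
    have e1' := e1.symm
    have e2' := e2.symm
    have e3' := e3.symm
    clear h2 h3 hmod hw key
    intro a b hab
    fin_cases a <;> fin_cases b <;> simp_all [f]
  refine ⟨Equiv.ofBijective f (Finite.injective_iff_bijective.mp hinj), ?_⟩
  funext n
  rw [hmod n]
  have hr : n % 3 = 0 ∨ n % 3 = 1 ∨ n % 3 = 2 := by omega
  rcases hr with h | h | h <;> simp [powOmega, h, f, Equiv.ofBijective]
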